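/- The Bargmann transform of the Hermite function h_n is a multiple of the monomial: B h_n(z) = (π^n/n!)^{1/2}·c·z^n for an explicit nonzero constant c, where h_n(t) = c_n e^{πt²} (d/dt)^n (e^{−2πt²}) with c_n chosen so that ‖h_n‖_{L²(ℝ)} = 1. -/

import Mathlib

/-!
With `g(t) = e^{-2πt²}`, the factor `e^{πt²}` in `h_n` cancels against the kernel, leaving
`B h_n(z) = c_n e^{-πz²/2} ∫ e^{2πtz} g⁽ⁿ⁾(t) dt`. Every derivative of `g` is a polynomial
times `g`, so each `e^{2πtz} g⁽ᵏ⁾` is integrable, and `n` integrations by parts move the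
derivatives onto `e^{2πtz}`: the integral is
`(-2πz)ⁿ ∫ e^{2πtz} g = (-2πz)ⁿ 2^{-1/2} e^{πz²/2}`. Hence
`B h_n(z) = c_n (-2π)ⁿ 2^{-1/2} zⁿ`, and `c_n ≠ 0` since `‖h_n‖ = 1`.
-/

open MeasureTheory Complex Real Polynomial

theorem exists_iteratedDeriv_exp_neg_mul_sq (a : ℝ) (n : ℕ) :
    ∃ P : ℝ[X], iteratedDeriv n (fun s => Real.exp (-a * s ^ 2)) =
      fun t => P.eval t * Real.exp (-a * t ^ 2) := by
  induction n with
  | zero => exact ⟨1, by simp⟩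
  | succ n ih =>
    obtain ⟨P, hP⟩ := ih
    refine ⟨derivative P - C (2 * a) * X * P, funext fun t => ?_⟩
    have hexp : HasDerivAt (fun s => Real.exp (-a * s ^ 2))
        (Real.exp (-a * t ^ 2) * (-a * (2 * t))) t := by
      simpa using ((hasDerivAt_pow 2 t).const_mul (-a)).exp
    rw [iteratedDeriv_succ, hP, ((P.hasDerivAt t).fun_mul hexp).deriv]
    simp only [eval_sub, eval_mul, eval_C, eval_X]
    ring

theorem integrable_eval_mul_exp_neg_mul_sq {b : ℝ} (hb : 0 < b) (P : ℝ[X]) :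
    Integrable fun x => P.eval x * Real.exp (-b * x ^ 2) := by
  induction P using Polynomial.induction_on' with
  | add p q hp hq => simpa only [eval_add, add_mul] using hp.fun_add hq
  | monomial k c =>
    have hk := integrable_rpow_mul_exp_neg_mul_sq hb (s := k)
      (neg_one_lt_zero.trans_le k.cast_nonneg)
    simp only [Real.rpow_natCast] at hk
    simpa only [eval_monomial, mul_assoc] using hk.const_mul c

theorem norm_cexp_mul_exp_neg_mul_sq_le {b : ℝ} (hb : 0 < b) (w : ℂ) (x : ℝ) :
    ‖cexp (w * x) * (Real.exp (-b * x ^ 2) : ℂ)‖ ≤ Real.exp (w.re ^ 2 / (4 * b)) := by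
  rw [norm_mul, Complex.norm_exp, Complex.norm_real, Real.norm_of_nonneg (Real.exp_pos _).le,
    ← Real.exp_add, Real.exp_le_exp, le_div_iff₀ (by positivity)]
  simp only [mul_re, ofReal_re, ofReal_im, mul_zero, sub_zero]
  nlinarith [sq_nonneg (w.re - 2 * b * x)]

/-- Half of the Gaussian makes the polynomial integrable, the other half keeps `cexp (w * t)`
bounded. -/
theorem integrable_cexp_mul_eval_mul_exp_neg_mul_sq {a : ℝ} (ha : 0 < a) (w : ℂ) (P : ℝ[X]) :
    Integrable fun t : ℝ => cexp (w * t) * ((P.eval t * Real.exp (-a * t ^ 2) : ℝ) : ℂ) := by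
  have hP : Integrable fun t : ℝ => ((P.eval t * Real.exp (-(a / 2) * t ^ 2) : ℝ) : ℂ) :=
    (integrable_eval_mul_exp_neg_mul_sq (half_pos ha) P).ofReal
  refine (hP.bdd_mul (by fun_prop) (.of_forall
    (norm_cexp_mul_exp_neg_mul_sq_le (half_pos ha) w))).congr (.of_forall fun t => ?_)
  have hsplit : Real.exp (-a * t ^ 2) =
      Real.exp (-(a / 2) * t ^ 2) * Real.exp (-(a / 2) * t ^ 2) := by
    rw [← Real.exp_add]; ring_nf
  simp only [hsplit, ofReal_mul]
  ring

theorem integrable_cexp_mul_iteratedDeriv_exp_neg_mul_sq {a : ℝ} (ha : 0 < a) (w : ℂ) (n : ℕ) :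
    Integrable fun t : ℝ =>
      cexp (w * t) * ((iteratedDeriv n (fun s => Real.exp (-a * s ^ 2)) t : ℝ) : ℂ) := by
  obtain ⟨P, hP⟩ := exists_iteratedDeriv_exp_neg_mul_sq a n
  simpa only [hP] using integrable_cexp_mul_eval_mul_exp_neg_mul_sq ha w P

theorem integral_cexp_mul_iteratedDeriv_succ_exp_neg_mul_sq {a : ℝ} (ha : 0 < a) (w : ℂ) (n : ℕ) :
    ∫ t : ℝ, cexp (w * t) * ((iteratedDeriv (n + 1) (fun s => Real.exp (-a * s ^ 2)) t : ℝ) : ℂ) =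
      -w * ∫ t : ℝ,
        cexp (w * t) * ((iteratedDeriv n (fun s => Real.exp (-a * s ^ 2)) t : ℝ) : ℂ) := by
  set g := fun s : ℝ => Real.exp (-a * s ^ 2)
  have hu (t : ℝ) : HasDerivAt (fun t : ℝ => cexp (w * t)) (cexp (w * t) * w) t := by
    simpa using ((hasDerivAt_id t).ofReal_comp.const_mul w).cexp
  have hv (t : ℝ) : HasDerivAt (fun t => ((iteratedDeriv n g t : ℝ) : ℂ))
      ((iteratedDeriv (n + 1) g t : ℝ) : ℂ) t := by
    have hg : ContDiff ℝ ⊤ g := by fun_prop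
    rw [iteratedDeriv_succ]
    exact ((hg.differentiable_iteratedDeriv n (WithTop.coe_lt_top _)) t).hasDerivAt.ofReal_comp
  have hu'v : Integrable fun t : ℝ => cexp (w * t) * w * ((iteratedDeriv n g t : ℝ) : ℂ) := by
    simpa only [mul_right_comm _ w] using
      (integrable_cexp_mul_iteratedDeriv_exp_neg_mul_sq ha w n).mul_const w
  rw [integral_mul_deriv_eq_deriv_mul_of_integrable (fun t _ => hu t) (fun t _ => hv t)
    (integrable_cexp_mul_iteratedDeriv_exp_neg_mul_sq ha w (n + 1)) hu'v
    (integrable_cexp_mul_iteratedDeriv_exp_neg_mul_sq ha w n)]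
  simp only [mul_right_comm _ w, integral_mul_const]
  ring

theorem integral_cexp_mul_exp_neg_mul_sq {a : ℝ} (ha : 0 < a) (w : ℂ) :
    ∫ t : ℝ, cexp (w * t) * (Real.exp (-a * t ^ 2) : ℂ) =
      (π / a) ^ (1 / 2 : ℂ) * cexp (w ^ 2 / (4 * a)) := by
  have h := integral_cexp_quadratic (b := -a) (by simpa using ha) w 0
  simp only [neg_neg, zero_sub] at h
  convert h using 3 with t
  · push_cast
    rw [← Complex.exp_add]
    ring_nf
  · ring

theorem integral_cexp_mul_iteratedDeriv_exp_neg_mul_sq {a : ℝ} (ha : 0 < a) (w : ℂ) (n : ℕ) :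
    ∫ t : ℝ, cexp (w * t) * ((iteratedDeriv n (fun s => Real.exp (-a * s ^ 2)) t : ℝ) : ℂ) =
      (-w) ^ n * ((π / a) ^ (1 / 2 : ℂ) * cexp (w ^ 2 / (4 * a))) := by
  induction n with
  | zero => simpa using integral_cexp_mul_exp_neg_mul_sq ha w
  | succ n ih => rw [integral_cexp_mul_iteratedDeriv_succ_exp_neg_mul_sq ha, ih, pow_succ]; ring

/-- the Bargmann transform of the n-th (L²-normalized) Hermite function
h_n(t) = c_n e^{πt²} (d/dt)^n e^{−2πt²} is a multiple of the monomial: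
B h_n(z) = (π^n/n!)^{1/2} · c · z^n for some nonzero constant c. -/
theorem bargmann_of_hermite (n : ℕ) (cn : ℝ)
    (h : ℝ → ℝ)
    (hdef : ∀ t : ℝ, h t = cn * Real.exp (π * t ^ 2) *
      iteratedDeriv n (fun s : ℝ => Real.exp (-2 * π * s ^ 2)) t)
    (hnorm : ∫ t : ℝ, h t ^ 2 = 1) :
    ∃ c : ℂ, c ≠ 0 ∧ ∀ z : ℂ,
      (∫ t : ℝ, (h t : ℂ) *
          Complex.exp (2 * π * (t : ℂ) * z - π * (t : ℂ) ^ 2 - π * z ^ 2 / 2)) =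
        (Real.sqrt (π ^ n / n.factorial) : ℂ) * c * z ^ n := by
  have hcn : cn ≠ 0 := by
    rintro rfl
    simp [hdef] at hnorm
  have hπ : (π : ℂ) ≠ 0 := ofReal_ne_zero.mpr pi_ne_zero
  have hsqrt : (Real.sqrt (π ^ n / n.factorial) : ℂ) ≠ 0 :=
    ofReal_ne_zero.mpr (Real.sqrt_ne_zero'.mpr (by positivity))
  refine ⟨cn * (-(2 * π)) ^ n * (1 / 2 : ℂ) ^ (1 / 2 : ℂ) / Real.sqrt (π ^ n / n.factorial),
    div_ne_zero (mul_ne_zero (mul_ne_zero (ofReal_ne_zero.mpr hcn) (by simp [hπ]))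
      (cpow_ne_zero_iff.mpr (.inl (by norm_num)))) hsqrt, fun z => ?_⟩
  have hintegrand (t : ℝ) : (h t : ℂ) * cexp (2 * π * t * z - π * t ^ 2 - π * z ^ 2 / 2) =
      cn * cexp (-(π * z ^ 2 / 2)) * (cexp (2 * π * z * t) *
        ((iteratedDeriv n (fun s => Real.exp (-(2 * π) * s ^ 2)) t : ℝ) : ℂ)) := by
    have hgauss : (fun s : ℝ => Real.exp (-2 * π * s ^ 2)) =
        fun s => Real.exp (-(2 * π) * s ^ 2) := by
      simp only [neg_mul]
    rw [hdef, hgauss, show 2 * π * t * z - π * t ^ 2 - π * z ^ 2 / 2 =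
      2 * π * z * t + -(π * z ^ 2 / 2) - π * t ^ 2 by ring, Complex.exp_sub, Complex.exp_add]
    push_cast
    field_simp
  simp_rw [hintegrand]
  rw [integral_const_mul, integral_cexp_mul_iteratedDeriv_exp_neg_mul_sq (by positivity),
    show (2 * π * z) ^ 2 / (4 * (2 * π : ℝ)) = π * z ^ 2 / 2 by push_cast; field_simp; ring,
    Complex.exp_neg]
  push_cast
  field_simp
  ring
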